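/- The Laplacian characteristic polynomial of K_{n_1,...,n_s}/F factors as Φ(x) = (Π_{p=1}^c (x − α_p)) · det(I_s + Y(x)), where Y(x) is the s×s matrix with (i,j) entry y_{ij} = Σ_{p=1}^c n_{jp}(m_p − n_{ip})/(x − α_p). -/

import Mathlib

open Finset

/-- `m_p = |V(T_p)|`: the number of vertices of `K_{n_1,…,n_s}` lying in the `p`-th component
of a spanning forest, where `comp` sends each vertex to the index of its component. -/
noncomputable def mP {s c : ℕ} (n : Fin s → ℕ) (comp : (Σ i, Fin (n i)) → Fin c)
    (p : Fin c) : ℕ :=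
  Nat.card {v : Σ i, Fin (n i) // comp v = p}

/-- `n_{ip} = |X_i ∩ V(T_p)|`: the number of vertices of the `i`-th partition class lying in
the `p`-th component. -/
noncomputable def nIP {s c : ℕ} (n : Fin s → ℕ) (comp : (Σ i, Fin (n i)) → Fin c)
    (i : Fin s) (p : Fin c) : ℕ :=
  Nat.card {v : Σ i, Fin (n i) // v.1 = i ∧ comp v = p}

/-- `α_p = n·m_p − Σ_i n_i·n_{ip}` (as a real number). -/
noncomputable def alphaR {s c : ℕ} (n : Fin s → ℕ) (comp : (Σ i, Fin (n i)) → Fin c)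
    (p : Fin c) : ℝ :=
  (∑ i, (n i : ℝ)) * (mP n comp p) - ∑ i, (n i : ℝ) * (nIP n comp i p)

/-- The number of edges of `K_{n_1,…,n_s}` with one endpoint in component `p` and the other in
component `q` (for `p ≠ q`), counted as ordered pairs with first coordinate in `T_p`. -/
noncomputable def wPQ {s c : ℕ} (n : Fin s → ℕ) (comp : (Σ i, Fin (n i)) → Fin c)
    (p q : Fin c) : ℕ :=
  Nat.card {uv : (Σ i, Fin (n i)) × (Σ i, Fin (n i)) //
    comp uv.1 = p ∧ comp uv.2 = q ∧
      (SimpleGraph.completeMultipartiteGraph (fun i => Fin (n i))).Adj uv.1 uv.2}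

/-- The Laplacian matrix of the contracted multigraph `K_{n_1,…,n_s}/F`: diagonal entries are
the degrees (with multiplicity), off-diagonal entries are minus the edge multiplicities. -/
noncomputable def LapCon {s c : ℕ} (n : Fin s → ℕ) (comp : (Σ i, Fin (n i)) → Fin c) :
    Matrix (Fin c) (Fin c) ℝ :=
  Matrix.of fun p q =>
    if p = q then ∑ q' ∈ Finset.univ.erase p, (wPQ n comp p q' : ℝ) else -(wPQ n comp p q : ℝ)

/-! Counting the edges of `K_{n_1,…,n_s}` from `T_p` to `T_q` class by class gives
`w_{pq} = Σ_i n_{ip} (m_q - n_{iq})`, and summing over `q` gives `Σ_q w_{pq} = α_p`.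
Hence `L(K_{n_1,…,n_s}/F) = diag(α) - Nᵀ V` with `N = (n_{ip})` and `V = (m_q - n_{iq})`.
The generalized matrix determinant lemma `det (D + U V) = det D · det (1 + V D⁻¹ U)`,
applied with `D = diag(x - α_p)` and `U = Nᵀ`, gives the factorization with `Y(x) = V D⁻¹ Nᵀ`. -/

lemma Matrix.det_diagonal_add_mul {m k K : Type*} [Fintype m] [DecidableEq m] [Fintype k]
    [DecidableEq k] [Field K] {d : m → K} (hd : ∀ i, d i ≠ 0) (U : Matrix m k K)
    (V : Matrix k m K) :
    (diagonal d + U * V).det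
      = (∏ i, d i) * (1 + V * diagonal (fun i => (d i)⁻¹) * U).det := by
  have hinv : (diagonal d)⁻¹ = diagonal fun i => (d i)⁻¹ :=
    inv_eq_right_inv <| by
      simp only [diagonal_mul_diagonal, mul_inv_cancel₀ (hd _), diagonal_one]
  rw [det_add_mul U V (by simpa [det_diagonal, prod_ne_zero_iff] using hd),
    det_diagonal, hinv]

section Counting

variable {s c : ℕ} (n : Fin s → ℕ) (comp : (Σ i, Fin (n i)) → Fin c)

lemma mP_eq_card (p : Fin c) : mP n comp p = #{v | comp v = p} := by
  rw [mP, Nat.card_eq_fintype_card, Fintype.card_subtype]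

lemma nIP_eq_card (i : Fin s) (p : Fin c) : nIP n comp i p = #{v | v.1 = i ∧ comp v = p} := by
  rw [nIP, Nat.card_eq_fintype_card, Fintype.card_subtype]

lemma mP_eq_sum_nIP (p : Fin c) : mP n comp p = ∑ i, nIP n comp i p := by
  rw [mP_eq_card, card_eq_sum_card_fiberwise (f := Sigma.fst) fun _ _ => mem_univ _]
  refine sum_congr rfl fun i _ => ?_
  rw [nIP_eq_card, filter_filter]
  simp only [and_comm]

lemma sum_nIP (i : Fin s) : ∑ p, nIP n comp i p = n i := by
  have hcard : #{v : Σ i, Fin (n i) | v.1 = i} = n i := by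
    rw [card_filter, ← univ_sigma_univ, sum_sigma]
    simp [apply_ite Finset.card, sum_ite_eq']
  rw [← hcard, card_eq_sum_card_fiberwise (f := comp) fun _ _ => mem_univ _]
  refine sum_congr rfl fun p _ => ?_
  rw [nIP_eq_card, filter_filter]

lemma sum_mP : ∑ p, mP n comp p = ∑ i, n i := by
  simp only [mP_eq_sum_nIP]
  rw [sum_comm]
  simp only [sum_nIP]

lemma card_pairs_eq_mP_mul (p q : Fin c) :
    #{uv : (Σ i, Fin (n i)) × (Σ i, Fin (n i)) | comp uv.1 = p ∧ comp uv.2 = q}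
      = mP n comp p * mP n comp q := by
  rw [mP_eq_card, mP_eq_card, ← card_product, ← filter_product, univ_product_univ]

lemma card_pairs_same_part_eq_sum (p q : Fin c) :
    #{uv : (Σ i, Fin (n i)) × (Σ i, Fin (n i)) |
        (comp uv.1 = p ∧ comp uv.2 = q) ∧ uv.1.1 = uv.2.1}
      = ∑ i, nIP n comp i p * nIP n comp i q := by
  rw [card_eq_sum_card_fiberwise (f := fun uv => uv.1.1) fun _ _ => mem_univ _]
  refine sum_congr rfl fun i _ => ?_
  rw [nIP_eq_card, nIP_eq_card, ← card_product, ← filter_product, filter_filter]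
  congr 1
  refine filter_congr fun ⟨u, v⟩ _ => ?_
  constructor
  · rintro ⟨⟨⟨hu, hv⟩, huv⟩, rfl⟩
    exact ⟨⟨rfl, hu⟩, huv.symm, hv⟩
  · rintro ⟨⟨rfl, hu⟩, huv, hv⟩
    exact ⟨⟨⟨hu, hv⟩, huv.symm⟩, rfl⟩

lemma wPQ_add_sum_nIP_mul (p q : Fin c) :
    wPQ n comp p q + ∑ i, nIP n comp i p * nIP n comp i q = mP n comp p * mP n comp q := by
  set pairs : Finset ((Σ i, Fin (n i)) × (Σ i, Fin (n i))) :=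
    {uv | comp uv.1 = p ∧ comp uv.2 = q}
  have hwPQ : wPQ n comp p q = #(pairs.filter fun uv => uv.1.1 ≠ uv.2.1) := by
    rw [wPQ, Nat.card_eq_fintype_card, Fintype.card_subtype, filter_filter]
    simp only [and_assoc]
    rfl
  rw [hwPQ, ← card_pairs_same_part_eq_sum, ← card_pairs_eq_mP_mul, ← filter_filter]
  simpa only [not_not] using
    card_filter_add_card_filter_not (s := pairs) (fun uv => uv.1.1 ≠ uv.2.1)

end Counting

section LaplacianDecomposition

variable {s c : ℕ} (n : Fin s → ℕ) (comp : (Σ i, Fin (n i)) → Fin c)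

open Matrix

noncomputable def nIPMatrix : Matrix (Fin s) (Fin c) ℝ :=
  of fun i p => nIP n comp i p

/-- Entry `(i, q)` is `m_q - n_{iq}`, the number of neighbours in `T_q` of any vertex of `X_i`;
in the paper's notation `(I_s - J_s) N = -nbrCountMatrix`. -/
noncomputable def nbrCountMatrix : Matrix (Fin s) (Fin c) ℝ :=
  of fun i q => mP n comp q - nIP n comp i q

lemma mP_eq_sum_nIP_real (p : Fin c) : (mP n comp p : ℝ) = ∑ i, (nIP n comp i p : ℝ) := by
  exact_mod_cast mP_eq_sum_nIP n comp p

lemma wPQ_eq_sum_nIP_mul (p q : Fin c) :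
    (wPQ n comp p q : ℝ) = ∑ i, (nIP n comp i p : ℝ) * (mP n comp q - nIP n comp i q) := by
  have h : (wPQ n comp p q : ℝ) + ∑ i, (nIP n comp i p : ℝ) * nIP n comp i q
      = mP n comp p * mP n comp q := by
    exact_mod_cast wPQ_add_sum_nIP_mul n comp p q
  simp only [mul_sub, sum_sub_distrib, ← sum_mul, ← mP_eq_sum_nIP_real]
  linarith

lemma transpose_nIPMatrix_mul_nbrCountMatrix :
    (nIPMatrix n comp)ᵀ * nbrCountMatrix n comp = of fun p q => (wPQ n comp p q : ℝ) := by
  ext p q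
  simp only [mul_apply, transpose_apply, nIPMatrix, nbrCountMatrix, of_apply,
    wPQ_eq_sum_nIP_mul]

lemma sum_wPQ (p : Fin c) : ∑ q, (wPQ n comp p q : ℝ) = alphaR n comp p := by
  have hm : ∑ q, (mP n comp q : ℝ) = ∑ i, (n i : ℝ) := by exact_mod_cast sum_mP n comp
  have hn (i : Fin s) : ∑ q, (nIP n comp i q : ℝ) = n i := by exact_mod_cast sum_nIP n comp i
  simp only [wPQ_eq_sum_nIP_mul]
  rw [sum_comm]
  simp only [← mul_sum, sum_sub_distrib, hm, hn, mul_sub, ← sum_mul,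
    ← mP_eq_sum_nIP_real, alphaR, mul_comm]

lemma lapCon_eq_diagonal_sub :
    LapCon n comp = diagonal (alphaR n comp) - (nIPMatrix n comp)ᵀ * nbrCountMatrix n comp := by
  ext p q
  rw [transpose_nIPMatrix_mul_nbrCountMatrix]
  by_cases hpq : p = q
  · subst hpq
    rw [LapCon, of_apply, if_pos rfl, Matrix.sub_apply, diagonal_apply_eq, of_apply, ← sum_wPQ,
      ← add_sum_erase _ _ (mem_univ p)]
    ring
  · simp [LapCon, hpq]

end LaplacianDecomposition

theorem stmt_9_general (s : ℕ) (n : Fin s → ℕ)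
    (c : ℕ) (comp : (Σ i, Fin (n i)) → Fin c) :
    ∀ x : ℝ, (∀ p, x ≠ alphaR n comp p) →
      (x • (1 : Matrix (Fin c) (Fin c) ℝ) - LapCon n comp).det
        = (∏ p, (x - alphaR n comp p)) *
            ((1 : Matrix (Fin s) (Fin s) ℝ) + Matrix.of fun i j =>
              ∑ p, (nIP n comp j p : ℝ) * ((mP n comp p : ℝ) - (nIP n comp i p : ℝ)) /
                (x - alphaR n comp p)).det := by
  intro x hx
  have hshift : x • (1 : Matrix (Fin c) (Fin c) ℝ) - LapCon n comp
      = Matrix.diagonal (fun p => x - alphaR n comp p)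
          + (nIPMatrix n comp).transpose * nbrCountMatrix n comp := by
    rw [lapCon_eq_diagonal_sub, Matrix.smul_one_eq_diagonal, sub_sub_eq_add_sub, add_sub_right_comm,
      Matrix.diagonal_sub]
  rw [hshift, Matrix.det_diagonal_add_mul fun p => sub_ne_zero.mpr (hx p)]
  congr 3
  ext i j
  simp only [Matrix.mul_apply, Matrix.diagonal_apply, Matrix.transpose_apply, nbrCountMatrix,
    nIPMatrix, Matrix.of_apply, mul_ite, mul_zero, sum_ite_eq', mem_univ, if_true]
  exact sum_congr rfl fun p _ => by ring

/-- The Laplacian characteristic polynomial of `K_{n_1,…,n_s}/F` factors as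
`Φ(x) = (∏_p (x − α_p)) · det(I_s + Y(x))`, for every `x ∉ {α_1,…,α_c}`, where
`Y(x)_{ij} = Σ_p n_{jp}(m_p − n_{ip})/(x − α_p)`. -/
theorem stmt_9 (s : ℕ) (hs : 2 ≤ s) (n : Fin s → ℕ) (hn : ∀ i, 1 ≤ n i)
    (F : SimpleGraph (Σ i, Fin (n i)))
    (hFG : F ≤ SimpleGraph.completeMultipartiteGraph (fun i => Fin (n i)))
    (hF : F.IsAcyclic)
    (c : ℕ) (comp : (Σ i, Fin (n i)) → Fin c)
    (hcomp : ∀ u v, comp u = comp v ↔ F.Reachable u v)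
    (hsurj : Function.Surjective comp) :
    ∀ x : ℝ, (∀ p, x ≠ alphaR n comp p) →
      (x • (1 : Matrix (Fin c) (Fin c) ℝ) - LapCon n comp).det
        = (∏ p, (x - alphaR n comp p)) *
            ((1 : Matrix (Fin s) (Fin s) ℝ) + Matrix.of fun i j =>
              ∑ p, (nIP n comp j p : ℝ) * ((mP n comp p : ℝ) - (nIP n comp i p : ℝ)) /
                (x - alphaR n comp p)).det :=
  stmt_9_general s n c comp
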